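/- arXiv:2008.06740 — 3 statements merged into one kernel-verified Lean document; each statement's English description precedes it below -/
import Mathlib

section
/- Let C be a cycle with ‖C‖ = 8a + b edges, where a ≥ 3 and 0 ≤ b ≤ 7 are integers. Then there exist vertices v_0, …, v_7 of C (indices modulo 8) such that the shortest v_i v_{i+1}-paths C_i of C for i ∈ {0,…,7} are pairwise edge-disjoint (so that C_0 ∪ ⋯ ∪ C_7 = C), and for every i ∈ {0,…,7}: ‖C_i‖ ∈ {a, a+1} and ‖C_i‖ + ‖C_{i+1}‖ ≤ 2a + ⌈b/4⌉. -/
open SimpleGraph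

variable {V : Type*}

/-- The vertex set of a walk. -/
def suppSet {G : SimpleGraph V} {u v : V} (w : G.Walk u v) : Set V :=
  {x | x ∈ w.support}

/-- An induced cycle of `G`. -/
def IsInducedCycle (G : SimpleGraph V) {r : V} (w : G.Walk r r) : Prop :=
  w.IsCycle ∧ ∀ a b : V, a ∈ w.support → b ∈ w.support → G.Adj a b → s(a, b) ∈ w.edges

/-- A hole of `G`: an induced cycle with at least 4 vertices. -/
def IsHole (G : SimpleGraph V) {r : V} (w : G.Walk r r) : Prop :=
  IsInducedCycle G w ∧ 4 ≤ w.length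

/-- An even hole of `G`. -/
def IsEvenHole (G : SimpleGraph V) {r : V} (w : G.Walk r r) : Prop :=
  IsHole G w ∧ Even w.length

/-- A shortest even hole of `G`. -/
def IsShortestEvenHole (G : SimpleGraph V) {r : V} (w : G.Walk r r) : Prop :=
  IsEvenHole G w ∧ ∀ (y : V) (w' : G.Walk y y), IsEvenHole G w' → w.length ≤ w'.length

/-- `P` is a path of `G` all of whose edges lie on the walk `c`
(used for "a `uv`-path of `C`"). -/
def IsPathOf (G : SimpleGraph V) {p q u v : V} (c : G.Walk p q) (P : G.Walk u v) : Prop :=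
  P.IsPath ∧ ∀ e ∈ P.edges, e ∈ c.edges

/-- The distance `d_C(u,v)` between `u` and `v` within the cycle `c`. -/
noncomputable def cycleDist (G : SimpleGraph V) {r : V} (c : G.Walk r r) (u v : V) : ℕ :=
  sInf {n | ∃ P : G.Walk u v, IsPathOf G c P ∧ P.length = n}

/-- The induced subgraph `G[S]` is a hole of `G`. -/
def IsHoleOn (G : SimpleGraph V) (S : Set V) : Prop :=
  ∃ (r : V) (w : G.Walk r r), IsHole G w ∧ suppSet w = S

/-- The induced subgraph `G[S]` is an even hole of `G`. -/
def IsEvenHoleOn (G : SimpleGraph V) (S : Set V) : Prop :=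
  ∃ (r : V) (w : G.Walk r r), IsEvenHole G w ∧ suppSet w = S

/-- The induced subgraph `G[S]` is a shortest even hole of `G`. -/
def IsShortestEvenHoleOn (G : SimpleGraph V) (S : Set V) : Prop :=
  ∃ (r : V) (w : G.Walk r r), IsShortestEvenHole G w ∧ suppSet w = S

/-- `P` is `C`-good: the union of `P` and one of the two `uv`-paths of `C`
is again a shortest even hole of `G`. -/
def CGood (G : SimpleGraph V) {r u v : V} (c : G.Walk r r) (P : G.Walk u v) : Prop :=
  ∃ Q : G.Walk u v, IsPathOf G c Q ∧ IsShortestEvenHoleOn G (suppSet P ∪ suppSet Q)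

/-- The standing assumptions for `C`-shortcuts: `P` is a `uv`-path of `G` for distinct
nonadjacent vertices `u`, `v` of `C`. -/
def ShortcutSetup (G : SimpleGraph V) {r u v : V} (c : G.Walk r r) (P : G.Walk u v) : Prop :=
  P.IsPath ∧ u ≠ v ∧ ¬G.Adj u v ∧ u ∈ c.support ∧ v ∈ c.support

/-- `P` is a `C`-shortcut: `2 ≤ ‖P‖ ≤ d_C(u,v)` and `‖P‖ < ‖C‖/4`. -/
def CShortcut (G : SimpleGraph V) {r u v : V} (c : G.Walk r r) (P : G.Walk u v) : Prop :=
  2 ≤ P.length ∧ P.length ≤ cycleDist G c u v ∧ 4 * P.length < c.length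

/-- `C1` and `C2` are the two `uv`-paths of the cycle `c`. -/
def ArcPair (G : SimpleGraph V) {r u v : V} (c : G.Walk r r) (C1 C2 : G.Walk u v) : Prop :=
  IsPathOf G c C1 ∧ IsPathOf G c C2 ∧ C1.length + C2.length = c.length ∧
    ∀ e ∈ c.edges, e ∈ C1.edges ∨ e ∈ C2.edges

/-- `P` is `C`-shallow: `‖P‖ ≥ d_C(u,v) − 1` and `G[P ∪ C2]` is a hole, where `C2` is the
longer of the two `uv`-paths of `C`. -/
def CShallow (G : SimpleGraph V) {r u v : V} (c : G.Walk r r) (P : G.Walk u v) : Prop :=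
  cycleDist G c u v - 1 ≤ P.length ∧
    ∀ C1 C2 : G.Walk u v, ArcPair G c C1 C2 → C1.length ≤ C2.length →
      IsHoleOn G (suppSet P ∪ suppSet C2)

/-- `P` is a worst `C`-shortcut. -/
def WorstCShortcut (G : SimpleGraph V) {r u v : V} (c : G.Walk r r) (P : G.Walk u v) : Prop :=
  ShortcutSetup G c P ∧ CShortcut G c P ∧ ¬CGood G c P ∧
    ∀ (u' v' : V) (P' : G.Walk u' v'),
      ShortcutSetup G c P' → CShortcut G c P' → ¬CGood G c P' →
        (P.length < P'.length ∨
          (P.length = P'.length ∧ cycleDist G c u' v' ≤ cycleDist G c u v))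

/-- `C` is good in `G`: every `C`-shortcut is `C`-good. -/
def GoodHole (G : SimpleGraph V) {r : V} (c : G.Walk r r) : Prop :=
  ∀ (u v : V) (P : G.Walk u v), ShortcutSetup G c P → CShortcut G c P → CGood G c P

/-- `P` is a shortest `uv`-path of `G`. -/
def IsShortestPath (G : SimpleGraph V) {u v : V} (P : G.Walk u v) : Prop :=
  P.IsPath ∧ ∀ Q : G.Walk u v, P.length ≤ Q.length

/-- The closed neighborhood `N_G[S]` of a vertex set `S`. -/
def closedNbhd (G : SimpleGraph V) (S : Set V) : Set V :=
  S ∪ {x | ∃ y ∈ S, G.Adj y x}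

/-- The subgraph of `G` induced on `S` (kept on the same vertex type: edges of `G`
with both ends in `S`). -/
def restrictTo (G : SimpleGraph V) (S : Set V) : SimpleGraph V where
  Adj a b := G.Adj a b ∧ a ∈ S ∧ b ∈ S
  symm := ⟨fun a b h => ⟨h.1.symm, h.2.2, h.2.1⟩⟩
  loopless := ⟨fun a h => G.loopless.irrefl a h.1⟩

/-- The vertex set of `H(u,v,x,y) = G[(V(G) \ N_G[V(P_uv ∪ P_xy) \ {u,v}]) ∪ {u,v}]`. -/
def Hverts (G : SimpleGraph V) {u v a b : V} (Puv : G.Walk u v) (Pxy : G.Walk a b) : Set V :=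
  (Set.univ \ closedNbhd G ((suppSet Puv ∪ suppSet Pxy) \ {u, v})) ∪ {u, v}

/-- The graph `H(u,v,x,y)`. -/
def Hgraph (G : SimpleGraph V) {u v a b : V} (Puv : G.Walk u v) (Pxy : G.Walk a b) :
    SimpleGraph V :=
  restrictTo G (Hverts G Puv Pxy)

/-- `G` is shallow. -/
def ShallowGraph (G : SimpleGraph V) : Prop :=
  ∃ (r : V) (c : G.Walk r r), IsShortestEvenHole G c ∧
    ∀ (u v : V) (P : G.Walk u v), WorstCShortcut G c P → CShallow G c P

/-- `G` is anti-shallow. -/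
def AntiShallowGraph (G : SimpleGraph V) : Prop :=
  ∀ (r : V) (c : G.Walk r r), IsShortestEvenHole G c → ¬GoodHole G c →
    ∀ (u v : V) (P : G.Walk u v), WorstCShortcut G c P → ¬CShallow G c P

/-- The induced subgraph `G[S]` is a path with end-vertices `u` and `v`. -/
def IsInducedPathOn (G : SimpleGraph V) (u v : V) (S : Set V) : Prop :=
  ∃ Q : G.Walk u v, Q.IsPath ∧ suppSet Q = S ∧
    ∀ a b : V, a ∈ S → b ∈ S → G.Adj a b → s(a, b) ∈ Q.edges

/-!
Cut `C` at the partial sums of lengths `L₀, …, L₇ ∈ {a, a + 1}` adding up to `‖C‖`, where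
the `b` longer arcs sit at alternate positions as long as `b ≤ 4`. Such an arc, of length
`L ≤ ‖C‖ / 2`, is a shortest path of `C` between its ends: label each vertex of `C` by its
position in `ℤ / ‖C‖`; a walk along `C` changes the label by `±1` per step, so a walk between
labels `t` and `t + L` has length at least `|z|` for some integer `z ≡ L (mod ‖C‖)`, hence at
least `L`.
-/

lemma List.getElem_mem_take_drop {α : Type*} (l : List α) {s L k : ℕ} (hk : k < l.length)
    (hsk : s ≤ k) (hkL : k < s + L) : l[k] ∈ (l.drop s).take L := by
  have hk' : k - s < ((l.drop s).take L).length := by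
    simp only [List.length_take, List.length_drop]
    omega
  convert List.getElem_mem hk' using 1
  simp only [List.getElem_take, List.getElem_drop]
  congr 1
  omega

lemma List.Nodup.disjoint_take_drop {α : Type*} {l : List α} (hl : l.Nodup) {s₁ L₁ s₂ : ℕ}
    (h : s₁ + L₁ ≤ s₂) (L₂ : ℕ) :
    List.Disjoint ((l.drop s₁).take L₁) ((l.drop s₂).take L₂) := by
  have hsplit : List.Disjoint (l.take s₂) (l.drop s₂) :=
    List.disjoint_of_nodup_append (by rwa [List.take_append_drop])
  refine List.disjoint_of_subset_right (List.take_subset _ _)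
    (List.disjoint_of_subset_left ?_ hsplit)
  rw [List.take_drop]
  exact ((List.drop_sublist _ _).trans (List.take_sublist_take_left h)).subset

lemma exists_le_lt_succ {t : ℕ → ℕ} {k : ℕ} (h₀ : t 0 ≤ k) :
    ∀ {m : ℕ}, k < t m → ∃ i < m, t i ≤ k ∧ k < t (i + 1)
  | 0, h => absurd h (by omega)
  | m + 1, h => by
    by_cases hm : k < t m
    · obtain ⟨i, hi, hik⟩ := exists_le_lt_succ h₀ hm
      exact ⟨i, by omega, hik⟩
    · exact ⟨m, by omega, by omega, h⟩

lemma ZMod.val_add_one_eq_mod {m : ℕ} [NeZero m] (i : ZMod m) :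
    (i + 1).val = (i.val + 1) % m := by
  rw [ZMod.val_add, ZMod.val_one_eq_one_mod, Nat.add_mod_mod]

namespace SimpleGraph.Walk

variable {G : SimpleGraph V} {u w : V}

def segment (p : G.Walk u w) (t L : ℕ) : G.Walk (p.getVert t) (p.getVert (t + L)) :=
  ((p.drop t).take L).copy rfl (p.drop_getVert t L)

lemma edges_segment (p : G.Walk u w) (t L : ℕ) :
    (p.segment t L).edges = (p.edges.drop t).take L := by
  simp [segment, edges_take, edges_drop]

lemma length_segment {p : G.Walk u w} {t L : ℕ} (h : t + L ≤ p.length) :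
    (p.segment t L).length = L := by
  simp only [segment, length_copy, take_length, drop_length]
  omega

lemma IsCycle.isPathOf_segment {c : G.Walk u u} (hc : c.IsCycle) (t : ℕ) {L : ℕ}
    (hL : L < c.length) : IsPathOf G c (c.segment t L) := by
  refine ⟨?_, fun e he => ?_⟩
  · rw [segment, isPath_copy]
    rcases Nat.eq_zero_or_pos t with rfl | ht
    · have := hc.isPath_take hL
      rw [isPath_def, support_take] at this ⊢
      simpa using this
    · exact (hc.isPath_drop ht).take L
  · rw [edges_segment] at he
    exact ((List.take_sublist _ _).trans (List.drop_sublist _ _)).subset he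

lemma IsCycle.exists_getVert_position {c : G.Walk u u} (hc : c.IsCycle) :
    ∃ f : V → ZMod c.length, ∀ k ≤ c.length, f (c.getVert k) = k := by
  classical
  set g := Function.invFunOn c.getVert {i | i ≤ c.length - 1}
  have hg : ∀ k ≤ c.length - 1, g (c.getVert k) = k := fun k hk =>
    hc.getVert_injOn'.leftInvOn_invFunOn hk
  refine ⟨fun x => g x, fun k hk => ?_⟩
  rcases hk.lt_or_eq with hk | rfl
  · simp only [hg k (by omega)]
  · have : c.getVert c.length = c.getVert 0 := by simp
    simp only [this, hg 0 (Nat.zero_le _), Nat.cast_zero, ZMod.natCast_self]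

lemma exists_int_abs_le_length_of_edges_subset {n : ℕ} {c : G.Walk u w} {f : V → ZMod n}
    (hf : ∀ k ≤ c.length, f (c.getVert k) = k) {x y : V} (P : G.Walk x y)
    (hP : ∀ e ∈ P.edges, e ∈ c.edges) :
    ∃ z : ℤ, |z| ≤ P.length ∧ (z : ZMod n) = f y - f x := by
  induction P with
  | nil => exact ⟨0, by simp⟩
  | @cons x x' y hadj P ih =>
    obtain ⟨z, hz, hzf⟩ := ih fun e he => hP e (by simp [he])
    obtain ⟨k, hk, hke⟩ := (c.mk_mem_edges_iff_exists).1 (hP s(x, x') (by simp))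
    obtain ⟨s, hs, hsf⟩ : ∃ s : ℤ, |s| = 1 ∧ (s : ZMod n) = f x' - f x := by
      rw [Sym2.eq_iff] at hke
      rcases hke with ⟨rfl, rfl⟩ | ⟨rfl, rfl⟩
      · exact ⟨1, abs_one, by rw [hf _ hk.le, hf _ hk]; push_cast; ring⟩
      · exact ⟨-1, by simp, by rw [hf _ hk.le, hf _ hk]; push_cast; ring⟩
    refine ⟨z + s, ?_, by push_cast; rw [hzf, hsf]; ring⟩
    calc |z + s| ≤ |z| + |s| := abs_add_le z s
      _ ≤ (cons hadj P).length := by rw [hs, length_cons]; push_cast; linarith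

lemma IsCycle.le_length_of_edges_subset {c : G.Walk u u} (hc : c.IsCycle) {t L : ℕ}
    (htL : t + L ≤ c.length) (hL : 2 * L ≤ c.length)
    (P : G.Walk (c.getVert t) (c.getVert (t + L))) (hP : ∀ e ∈ P.edges, e ∈ c.edges) :
    L ≤ P.length := by
  obtain ⟨f, hf⟩ := hc.exists_getVert_position
  obtain ⟨z, hz, hzf⟩ := exists_int_abs_le_length_of_edges_subset hf P hP
  rw [hf _ htL, hf _ (by omega), Nat.cast_add, add_sub_cancel_left] at hzf
  obtain ⟨m, hm⟩ :=
    (ZMod.intCast_eq_intCast_iff_dvd_sub z L c.length).1 (by push_cast; exact hzf)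
  obtain ⟨hz₁, hz₂⟩ := abs_le.1 hz
  rcases lt_trichotomy m 0 with hm0 | rfl | hm0
  · nlinarith
  · simp only [mul_zero] at hm
    omega
  · nlinarith

lemma IsCycle.cycleDist_getVert_add {c : G.Walk u u} (hc : c.IsCycle) {t L : ℕ}
    (htL : t + L ≤ c.length) (hL : 2 * L ≤ c.length) :
    cycleDist G c (c.getVert t) (c.getVert (t + L)) = L := by
  have hseg := hc.isPathOf_segment t (L := L) (by have := hc.three_le_length; omega)
  refine le_antisymm (Nat.sInf_le ⟨_, hseg, length_segment htL⟩) ?_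
  refine le_csInf ⟨_, _, hseg, rfl⟩ ?_
  rintro _ ⟨P, hP, rfl⟩
  exact hc.le_length_of_edges_subset htL hL P hP.2

open Finset in
theorem IsCycle.exists_arc_partition {c : G.Walk u u} (hc : c.IsCycle) {m : ℕ} [NeZero m]
    (L : ℕ → ℕ) (hsum : ∑ i ∈ range m, L i = c.length)
    (hL : ∀ i < m, 2 * L i ≤ c.length) :
    ∃ (v : ZMod m → V) (A : ∀ i : ZMod m, G.Walk (v i) (v (i + 1))),
      (∀ i, IsPathOf G c (A i)) ∧
      (∀ i, (A i).length = cycleDist G c (v i) (v (i + 1))) ∧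
      (∀ i j, i ≠ j → ∀ e ∈ (A i).edges, e ∉ (A j).edges) ∧
      (∀ e ∈ c.edges, ∃ i, e ∈ (A i).edges) ∧
      (∀ i, (A i).length = L i.val) := by
  set t : ℕ → ℕ := fun j => ∑ i ∈ range j, L i with ht
  have ht_succ (j : ℕ) : t (j + 1) = t j + L j := sum_range_succ L j
  have ht_mono : Monotone t := fun i j hij => sum_le_sum_of_subset (range_subset_range.2 hij)
  have htm : t m = c.length := hsum
  have hfits (i : ZMod m) : t i.val + L i.val ≤ c.length := by
    rw [← ht_succ, ← htm]
    exact ht_mono i.val_lt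
  have hnext (i : ZMod m) : c.getVert (t i.val + L i.val) = c.getVert (t (i + 1).val) := by
    rw [ZMod.val_add_one_eq_mod, ← ht_succ]
    rcases (show i.val + 1 ≤ m from i.val_lt).lt_or_eq with hi | hi
    · rw [Nat.mod_eq_of_lt hi]
    · rw [hi, Nat.mod_self, htm, getVert_length]
      simp [ht]
  have hlt (i : ZMod m) : L i.val < c.length := by
    have := hc.three_le_length
    have := hL _ i.val_lt
    omega
  have hedges (i : ZMod m) := edges_segment c (t i.val) (L i.val)
  refine ⟨fun i => c.getVert (t i.val),
    fun i => (c.segment (t i.val) (L i.val)).copy rfl (hnext i),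
    fun i => ?_, fun i => ?_, fun i j hij => ?_, fun e he => ?_, fun i => ?_⟩
  · obtain ⟨hpath, hsub⟩ := hc.isPathOf_segment (t i.val) (hlt i)
    exact ⟨by rwa [isPath_copy], by rwa [edges_copy]⟩
  · dsimp only
    rw [length_copy, length_segment (hfits i), ← hnext,
      hc.cycleDist_getVert_add (hfits i) (hL _ i.val_lt)]
  · rw [edges_copy, edges_copy, hedges, hedges]
    rcases lt_or_gt_of_ne (fun h => hij (ZMod.val_injective m h)) with h | h
    · exact hc.edges_nodup.disjoint_take_drop ((ht_succ _).symm.trans_le (ht_mono h)) _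
    · exact (hc.edges_nodup.disjoint_take_drop ((ht_succ _).symm.trans_le (ht_mono h)) _).symm
  · obtain ⟨k, hk, rfl⟩ := List.mem_iff_getElem.1 he
    obtain ⟨i, hi, hik, hki⟩ := exists_le_lt_succ (t := t) (by simp [ht]) (m := m)
      (by rwa [htm, ← length_edges])
    refine ⟨i, ?_⟩
    rw [edges_copy, hedges, ZMod.val_natCast_of_lt hi]
    exact List.getElem_mem_take_drop _ hk hik (ht_succ i ▸ hki)
  · rw [length_copy, length_segment (hfits i)]

end SimpleGraph.Walk

/-- The `b` extra edges go to the arcs `0, 2, 4, 6, 1, 3, 5, 7` in this order, so two cyclically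
consecutive arcs both receive one only when `b ≥ 5`. -/
def extraEdge (b i : ℕ) : ℕ :=
  if (if i % 2 = 0 then i / 2 else 4 + i / 2) < b then 1 else 0

open Finset in
lemma extraEdge_spec : ∀ b ≤ 7, ∑ i ∈ range 8, extraEdge b i = b ∧ ∀ i < 8,
    extraEdge b i ≤ 1 ∧ extraEdge b i + extraEdge b ((i + 1) % 8) ≤ (b + 3) / 4 := by
  decide

open Finset in
lemma exists_balanced_lengths (a : ℕ) {b : ℕ} (hb : b ≤ 7) :
    ∃ L : ℕ → ℕ, ∑ i ∈ range 8, L i = 8 * a + b ∧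
      ∀ i < 8, (L i = a ∨ L i = a + 1) ∧ L i + L ((i + 1) % 8) ≤ 2 * a + (b + 3) / 4 := by
  obtain ⟨hsum, hext⟩ := extraEdge_spec b hb
  refine ⟨fun i => a + extraEdge b i, by simp [sum_add_distrib, hsum], fun i hi => ?_⟩
  have := hext i hi
  dsimp only
  omega

theorem stmt13 (G : SimpleGraph V) {r : V} (c : G.Walk r r) (hc : c.IsCycle)
    (a b : ℕ) (ha : 3 ≤ a) (hb : b ≤ 7) (hlen : c.length = 8 * a + b) :
    ∃ (v : ZMod 8 → V) (A : ∀ i : ZMod 8, G.Walk (v i) (v (i + 1))),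
      (∀ i, IsPathOf G c (A i)) ∧
      (∀ i, (A i).length = cycleDist G c (v i) (v (i + 1))) ∧
      (∀ i j, i ≠ j → ∀ e ∈ (A i).edges, e ∉ (A j).edges) ∧
      (∀ e ∈ c.edges, ∃ i, e ∈ (A i).edges) ∧
      (∀ i, (A i).length = a ∨ (A i).length = a + 1) ∧
      (∀ i, (A i).length + (A (i + 1)).length ≤ 2 * a + (b + 3) / 4) := by
  obtain ⟨L, hsum, hL⟩ := exists_balanced_lengths a hb
  obtain ⟨v, A, hpath, hdist, hdisj, hcover, hlength⟩ :=
    hc.exists_arc_partition L (hsum.trans hlen.symm) fun i hi => by have := (hL i hi).1; omega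
  refine ⟨v, A, hpath, hdist, hdisj, hcover, fun i => ?_, fun i => ?_⟩
  · rw [hlength]
    exact (hL _ i.val_lt).1
  · rw [hlength, hlength, ZMod.val_add_one_eq_mod]
    exact (hL _ i.val_lt).2
end

section
/- Let C be a good shortest even hole of a graph G with ‖C‖ = 8a + b, where a ≥ 3 and 0 ≤ b ≤ 7 are integers. Let v_0, …, v_7 be vertices of C (indices modulo 8) such that the shortest v_i v_{i+1}-paths C_i of C are pairwise edge-disjoint and satisfy ‖C_i‖ ∈ {a, a+1} and ‖C_i‖ + ‖C_{i+1}‖ ≤ 2a + ⌈b/4⌉ for all i. Then every shortest v_i v_{i+1}-path P_i of G satisfies ‖P_i‖ = ‖C_i‖. -/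
open SimpleGraph

variable {V : Type*}

/-!
If a shortest `vᵢvᵢ₊₁`-path `P` were shorter than `Cᵢ`, whose length is `d_C(vᵢ, vᵢ₊₁) ≥ a`,
it would be a `C`-shortcut (`‖P‖ ≤ a < ‖C‖/4`), hence `C`-good: together with some
`vᵢvᵢ₊₁`-path `Q` of `C` it spans a shortest even hole. That hole has `‖C‖` vertices, so
`‖P‖ + ‖Q‖ ≥ ‖C‖`, and the arc of `C` complementary to `Q` has length at most
`‖P‖ < d_C(vᵢ, vᵢ₊₁)`.
-/

namespace SimpleGraph.Walk

variable {G : SimpleGraph V}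

lemma IsPath.ne_of_length_pos {u v : V} {p : G.Walk u v} (hp : p.IsPath) (h : 0 < p.length) :
    u ≠ v := by
  rintro rfl
  exact h.ne' (isPath_iff_nil.mp hp).length_eq_zero

lemma mem_support_of_edges_subset {u v x y : V} {p : G.Walk u v} {q : G.Walk x y}
    (hpq : p.edges ⊆ q.edges) (huv : u ≠ v) : u ∈ q.support := by
  cases p with
  | nil => exact absurd rfl huv
  | @cons _ w _ f p => exact q.fst_mem_support_of_mem_edges (hpq (by simp : s(u, w) ∈ _))

lemma IsPath.eq_cons_of_mem_edges {x y z : V} {p : G.Walk x y} (hp : p.IsPath)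
    (h : s(x, z) ∈ p.edges) : ∃ (f : G.Adj x z) (p' : G.Walk z y), p = cons f p' := by
  cases p with
  | nil => simp at h
  | cons f p' =>
    rcases List.mem_cons.mp h with h | h
    · obtain rfl := Sym2.congr_right.mp h
      exact ⟨f, p', rfl⟩
    · exact absurd (p'.fst_mem_support_of_mem_edges h) ((cons_isPath_iff _ _).mp hp).2

lemma IsPath.exists_eq_append_of_edges_subset {x v y : V} {q : G.Walk x v} {p : G.Walk x y}
    (hq : q.IsPath) (hp : p.IsPath) (hqp : q.edges ⊆ p.edges) :
    ∃ r : G.Walk v y, p = q.append r := by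
  induction q with
  | nil => exact ⟨p, rfl⟩
  | @cons x z _ f q ih =>
    have hx := ((cons_isPath_iff _ _).mp hq).2
    obtain ⟨f', p', rfl⟩ := hp.eq_cons_of_mem_edges (hqp (by simp : s(x, z) ∈ _))
    have hqp' : q.edges ⊆ p'.edges := fun e he => by
      rcases List.mem_cons.mp (hqp (List.mem_cons_of_mem _ he)) with rfl | h
      · exact absurd (q.fst_mem_support_of_mem_edges he) hx
      · exact h
    obtain ⟨r, rfl⟩ := ih hq.of_cons hp.of_cons hqp'
    exact ⟨r, rfl⟩

lemma IsCycle.exists_eq_cons_or_reverse_eq_cons {u z : V} {c : G.Walk u u} (hc : c.IsCycle)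
    (h : s(u, z) ∈ c.edges) :
    ∃ (f : G.Adj u z) (p : G.Walk z u), c = cons f p ∨ c.reverse = cons f p := by
  cases c with
  | nil => simp at h
  | cons g c =>
    rcases List.mem_cons.mp h with h | h
    · obtain rfl := Sym2.congr_right.mp h
      exact ⟨g, c, Or.inl rfl⟩
    · obtain ⟨f, p, hp⟩ := ((cons_isCycle_iff _ _).mp hc).1.reverse.eq_cons_of_mem_edges
        (by rw [edges_reverse]; exact List.mem_reverse.mpr h)
      exact ⟨f, p.concat g.symm, Or.inr (by rw [reverse_cons, hp]; rfl)⟩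

lemma exists_isPath_length_add_eq_of_cons {u v z : V} (f : G.Adj u z) {p : G.Walk z u}
    (hp : p.IsPath) {q : G.Walk z v} (hq : (cons f q).IsPath)
    (hqp : (cons f q).edges ⊆ (cons f p).edges) :
    ∃ q' : G.Walk u v, q'.IsPath ∧ q'.edges ⊆ (cons f p).edges ∧
      (cons f q).length + q'.length = (cons f p).length := by
  have hu := ((cons_isPath_iff _ _).mp hq).2
  have hqp' : q.edges ⊆ p.edges := fun e he => by
    rcases List.mem_cons.mp (hqp (List.mem_cons_of_mem _ he)) with rfl | h
    · exact absurd (q.fst_mem_support_of_mem_edges he) hu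
    · exact h
  obtain ⟨r, rfl⟩ := hq.of_cons.exists_eq_append_of_edges_subset hp hqp'
  refine ⟨r.reverse, hp.of_append_right.reverse, fun e he => ?_, ?_⟩
  · simp only [edges_reverse, List.mem_reverse] at he
    simp [he]
  · simp only [length_cons, length_append, length_reverse]
    omega

lemma IsCycle.exists_isPath_length_add_eq {u v : V} {c : G.Walk u u} (hc : c.IsCycle)
    {q : G.Walk u v} (hq : q.IsPath) (hqc : q.edges ⊆ c.edges) (hvu : v ≠ u) :
    ∃ q' : G.Walk u v, q'.IsPath ∧ q'.edges ⊆ c.edges ∧ q.length + q'.length = c.length := by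
  cases q with
  | nil => exact absurd rfl hvu
  | @cons _ z _ f q =>
    obtain ⟨f', p, rfl | h⟩ := hc.exists_eq_cons_or_reverse_eq_cons (hqc (by simp : s(u, z) ∈ _))
    · exact exists_isPath_length_add_eq_of_cons f ((cons_isCycle_iff _ _).mp hc).1 hq hqc
    · have hp : p.IsPath := ((cons_isCycle_iff _ _).mp (h ▸ hc.reverse)).1
      have hqc' : (cons f q).edges ⊆ (cons f p).edges := by
        rw [← h, edges_reverse]
        exact fun e he => List.mem_reverse.mpr (hqc he)
      obtain ⟨q', hq', hq'c, hlen⟩ := exists_isPath_length_add_eq_of_cons f hp hq hqc'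
      refine ⟨q', hq', ?_, by rw [hlen, ← h, length_reverse]⟩
      rw [← h, edges_reverse] at hq'c
      exact fun e he => List.mem_reverse.mp (hq'c he)

lemma IsCycle.card_support_toFinset [DecidableEq V] {u : V} {c : G.Walk u u} (hc : c.IsCycle) :
    c.support.toFinset.card = c.length := by
  cases c with
  | nil => exact absurd hc not_isCycle_nil
  | cons f p =>
    rw [support_cons, List.toFinset_cons, Finset.insert_eq_of_mem (by simp),
      List.toFinset_card_of_nodup ((cons_isCycle_iff _ _).mp hc).1.support_nodup,
      length_support, length_cons]

lemma card_support_toFinset_union_le [DecidableEq V] {u v : V} {p q : G.Walk u v}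
    (hp : p.IsPath) (hq : q.IsPath) (huv : u ≠ v) :
    (p.support.toFinset ∪ q.support.toFinset).card ≤ p.length + q.length := by
  have hends : ({u, v} : Finset V) ⊆ p.support.toFinset ∩ q.support.toFinset := by
    simp [Finset.insert_subset_iff]
  have := Finset.card_le_card hends
  rw [Finset.card_pair huv] at this
  have := Finset.card_union_add_card_inter p.support.toFinset q.support.toFinset
  rw [List.toFinset_card_of_nodup hp.support_nodup, List.toFinset_card_of_nodup hq.support_nodup,
    length_support, length_support] at this
  omega

end SimpleGraph.Walk

open SimpleGraph.Walk

variable {G : SimpleGraph V}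

lemma IsShortestEvenHole.isInducedCycle {r : V} {c : G.Walk r r} (hC : IsShortestEvenHole G c) :
    IsInducedCycle G c :=
  hC.1.1.1

lemma IsShortestEvenHole.isCycle {r : V} {c : G.Walk r r} (hC : IsShortestEvenHole G c) :
    c.IsCycle :=
  hC.isInducedCycle.1

lemma IsShortestEvenHole.length_eq {r s : V} {c : G.Walk r r} {w : G.Walk s s}
    (hc : IsShortestEvenHole G c) (hw : IsShortestEvenHole G w) : w.length = c.length :=
  le_antisymm (hw.2 _ _ hc.1) (hc.2 _ _ hw.1)

lemma IsPathOf.mem_support {p q u v : V} {c : G.Walk p q} {P : G.Walk u v}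
    (hP : IsPathOf G c P) (huv : u ≠ v) : u ∈ c.support ∧ v ∈ c.support :=
  ⟨mem_support_of_edges_subset (fun e he => hP.2 e he) huv,
    mem_support_of_edges_subset (p := P.reverse) (fun e he => hP.2 e (by simpa using he))
      huv.symm⟩

lemma cycleDist_le_length {r u v : V} {c : G.Walk r r} {P : G.Walk u v} (hP : IsPathOf G c P) :
    cycleDist G c u v ≤ P.length :=
  Nat.sInf_le ⟨P, hP, rfl⟩

lemma cycleDist_le_one_of_adj {r u v : V} {c : G.Walk r r} (hc : IsInducedCycle G c)
    (hu : u ∈ c.support) (hv : v ∈ c.support) (huv : G.Adj u v) : cycleDist G c u v ≤ 1 := by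
  refine (cycleDist_le_length ⟨huv.isPath_toWalk, ?_⟩).trans_eq huv.length_toWalk
  simpa using hc.2 u v hu hv huv

lemma cycleDist_add_length_le {r u v : V} {c : G.Walk r r} (hc : c.IsCycle) {Q : G.Walk u v}
    (hQ : IsPathOf G c Q) (huv : u ≠ v) : cycleDist G c u v + Q.length ≤ c.length := by
  classical
  have hu := (hQ.mem_support huv).1
  have hrot : ∀ e, e ∈ (c.rotate u hu).edges ↔ e ∈ c.edges :=
    fun _ => (c.rotate_edges u hu).mem_iff
  obtain ⟨Q', hQ', hQ'c, hlen⟩ := (hc.rotate hu).exists_isPath_length_add_eq hQ.1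
    (fun e he => (hrot e).mpr (hQ.2 e he)) huv.symm
  have := cycleDist_le_length ⟨hQ', fun e he => (hrot e).mp (hQ'c he)⟩
  rw [length_rotate] at hlen
  omega

lemma CGood.cycleDist_le_length {r u v : V} {c : G.Walk r r} (hC : IsShortestEvenHole G c)
    {P : G.Walk u v} (hP : P.IsPath) (huv : u ≠ v) (hgood : CGood G c P) :
    cycleDist G c u v ≤ P.length := by
  classical
  obtain ⟨Q, hQ, s, W, hW, hWPQ⟩ := hgood
  have hsupp : W.support.toFinset = P.support.toFinset ∪ Q.support.toFinset := by
    ext x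
    simpa [suppSet] using Set.ext_iff.mp hWPQ x
  have hlen_le : c.length ≤ P.length + Q.length := by
    rw [← hC.length_eq hW, ← hW.isCycle.card_support_toFinset, hsupp]
    exact card_support_toFinset_union_le hP hQ.1 huv
  have := cycleDist_add_length_le hC.isCycle hQ huv
  omega

lemma GoodHole.cycleDist_le_length {r u v : V} {c : G.Walk r r} (hC : IsShortestEvenHole G c)
    (hgood : GoodHole G c) {P : G.Walk u v} (hP : P.IsPath) (huv : u ≠ v) (hnadj : ¬G.Adj u v)
    (hu : u ∈ c.support) (hv : v ∈ c.support) (hPc : 4 * P.length < c.length) :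
    cycleDist G c u v ≤ P.length := by
  by_contra! hlt
  have h2 : 2 ≤ P.length := by
    by_contra! h
    interval_cases hl : P.length
    · exact huv (eq_of_length_eq_zero hl)
    · exact hnadj (exists_length_eq_one_iff.mp ⟨P, hl⟩)
  exact hlt.not_ge ((hgood u v P ⟨hP, huv, hnadj, hu, hv⟩ ⟨h2, hlt.le, hPc⟩).cycleDist_le_length
    hC hP huv)

theorem stmt14_general (G : SimpleGraph V) {r : V} (c : G.Walk r r)
    (hC : IsShortestEvenHole G c) (hgood : GoodHole G c)
    (a b : ℕ) (ha : 3 ≤ a) (hlen : c.length = 8 * a + b)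
    (v : ZMod 8 → V) (A : ∀ i : ZMod 8, G.Walk (v i) (v (i + 1)))
    (hA : ∀ i, IsPathOf G c (A i))
    (hAshort : ∀ i, (A i).length = cycleDist G c (v i) (v (i + 1)))
    (hval : ∀ i, (A i).length = a ∨ (A i).length = a + 1) :
    ∀ (i : ZMod 8) (P : G.Walk (v i) (v (i + 1))), IsShortestPath G P →
      P.length = (A i).length := by
  intro i P hP
  have hAi := hAshort i
  have hAlen : a ≤ (A i).length ∧ (A i).length ≤ a + 1 := by rcases hval i with h | h <;> omega
  have hne : v i ≠ v (i + 1) := (hA i).1.ne_of_length_pos (by omega)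
  obtain ⟨hu, hv⟩ := (hA i).mem_support hne
  have hnadj : ¬G.Adj (v i) (v (i + 1)) := fun hadj => by
    have := cycleDist_le_one_of_adj hC.isInducedCycle hu hv hadj
    omega
  have hPA : P.length ≤ (A i).length := hP.2 (A i)
  have hAP := hgood.cycleDist_le_length hC hP.1 hne hnadj hu hv (by omega)
  omega

theorem stmt14 (G : SimpleGraph V) {r : V} (c : G.Walk r r)
    (hC : IsShortestEvenHole G c) (hgood : GoodHole G c)
    (a b : ℕ) (ha : 3 ≤ a) (hb : b ≤ 7) (hlen : c.length = 8 * a + b)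
    (v : ZMod 8 → V) (A : ∀ i : ZMod 8, G.Walk (v i) (v (i + 1)))
    (hA : ∀ i, IsPathOf G c (A i))
    (hAshort : ∀ i, (A i).length = cycleDist G c (v i) (v (i + 1)))
    (hdisj : ∀ i j, i ≠ j → ∀ e ∈ (A i).edges, e ∉ (A j).edges)
    (hval : ∀ i, (A i).length = a ∨ (A i).length = a + 1)
    (hsum : ∀ i, (A i).length + (A (i + 1)).length ≤ 2 * a + (b + 3) / 4) :
    ∀ (i : ZMod 8) (P : G.Walk (v i) (v (i + 1))), IsShortestPath G P →
      P.length = (A i).length :=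
  stmt14_general G c hC hgood a b ha hlen v A hA hAshort hval
end

section
/- Let C be a good shortest even hole of a graph G with ‖C‖ = 8a + b, where a ≥ 3 and 0 ≤ b ≤ 7 are integers. Let v_0, …, v_7 be vertices of C (indices modulo 8) such that the shortest v_i v_{i+1}-paths C_i of C are pairwise edge-disjoint and satisfy ‖C_i‖ ∈ {a, a+1} and ‖C_i‖ + ‖C_{i+1}‖ ≤ 2a + ⌈b/4⌉ for all i. For each i, let P_i be an arbitrary shortest v_i v_{i+1}-path of G. Then for every i ∈ {0,…,7}, the induced subgraph G[P_i ∪ P_{i+1}] is a path (with end-vertices v_i and v_{i+2}). -/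
open SimpleGraph

variable {V : Type*}

/-!
The arc `A i ∪ A (i + 1)` of `C` is a path of `C` of length `ℓ` with `4 (ℓ - 1) < ‖C‖`. A
`v i v (i + 2)`-path `R` of `G` shorter than `ℓ` would be a `C`-shortcut, hence `C`-good; but
the hole it closes with an arc `Q` of `C` has at most `‖R‖ + ‖Q‖ < ℓ + ‖Q‖ ≤ ‖C‖` vertices,
too few for a shortest even hole. So the arc is a geodesic of `G`. The walk `P i ++ P (i + 1)`
is no longer than the arc, hence also a geodesic, and geodesics are induced paths.
-/

namespace IsPathOf

variable {G : SimpleGraph V} {p q u x : V} {c : G.Walk p q}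

lemma reverse {W : G.Walk u x} (hW : IsPathOf G c W) : IsPathOf G c W.reverse :=
  ⟨hW.1.reverse, fun e he => hW.2 e (by simpa using he)⟩

lemma start_mem_support {W : G.Walk u x} (hW : IsPathOf G c W) (hne : u ≠ x) :
    u ∈ c.support := by
  cases W with
  | nil => exact absurd rfl hne
  | cons h W => exact c.fst_mem_support_of_mem_edges (hW.2 _ (List.mem_cons_self ..))

lemma end_mem_support {W : G.Walk u x} (hW : IsPathOf G c W) (hne : u ≠ x) :
    x ∈ c.support :=
  hW.reverse.start_mem_support hne.symm

end IsPathOf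

namespace SimpleGraph.Walk

variable {G : SimpleGraph V} {r u v w x m : V}

theorem IsPath.eq_takeUntil_of_edges_subset [DecidableEq V] {p : G.Walk u v} {W : G.Walk u x}
    (hp : p.IsPath) (hW : W.IsPath) (hsub : W.edges ⊆ p.edges) :
    ∃ h : x ∈ p.support, W = p.takeUntil x h := by
  induction W generalizing v with
  | nil => exact ⟨p.start_mem_support, (takeUntil_first p).symm⟩
  | cons hadj W ih =>
    cases p with
    | nil => simp at hsub
    | cons hp' q =>
      rw [cons_isPath_iff] at hp hW
      have hfirst := hsub (List.mem_cons_self ..)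
      rw [edges_cons, List.mem_cons] at hfirst
      obtain rfl : _ = _ := hfirst.elim Sym2.congr_right.mp
        (fun h => (hp.2 (q.fst_mem_support_of_mem_edges h)).elim)
      have hWq : W.edges ⊆ q.edges := fun e he =>
        (List.mem_cons.mp (hsub (List.mem_cons_of_mem _ he))).resolve_left
          (by rintro rfl; exact hW.2 (W.fst_mem_support_of_mem_edges he))
      obtain ⟨hx, rfl⟩ := ih hp.1 hW.1 hWq
      exact ⟨List.mem_of_mem_tail hx, (takeUntil_cons hx
        (by rintro rfl; exact hW.2 (end_mem_support _)) hp').symm⟩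

lemma eq_cons_takeUntil_or_eq_reverse_dropUntil [DecidableEq V] {h : G.Adj u w}
    {q : G.Walk w u} (hc : (cons h q).IsCycle) {W : G.Walk u x} (hx : x ≠ u)
    (hW : IsPathOf G (cons h q) W) :
    (∃ hx, W = cons h (q.takeUntil x hx)) ∨ ∃ hx, W = (q.dropUntil x hx).reverse := by
  rw [cons_isCycle_iff] at hc
  cases W with
  | nil => exact absurd rfl hx
  | @cons _ w' _ h' W' =>
    obtain ⟨hW'path, huW'⟩ := (cons_isPath_iff _ _).mp hW.1
    have hsub : ∀ e ∈ W'.edges, e ∈ q.edges := fun e he =>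
      (List.mem_cons.mp (hW.2 e (List.mem_cons_of_mem _ he))).resolve_left
        (by rintro rfl; exact huW' (W'.fst_mem_support_of_mem_edges he))
    by_cases hw : w' = w
    · subst hw
      obtain ⟨hx, rfl⟩ := hc.1.eq_takeUntil_of_edges_subset hW'path hsub
      exact Or.inl ⟨hx, rfl⟩
    · have hfirst : s(u, w') ∈ q.edges :=
        (List.mem_cons.mp (hW.2 _ (List.mem_cons_self ..))).resolve_left
          (fun he => hw (Sym2.congr_right.mp he))
      have hrev : (cons h' W').edges ⊆ q.reverse.edges := by
        intro e he
        rw [edges_reverse, List.mem_reverse]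
        exact (List.mem_cons.mp he).elim (· ▸ hfirst) (hsub e)
      obtain ⟨hx', heq⟩ := hc.1.reverse.eq_takeUntil_of_edges_subset hW.1 hrev
      have hxq : x ∈ q.support := by simpa using hx'
      obtain ⟨_, heq'⟩ := hc.1.reverse.eq_takeUntil_of_edges_subset
        (hc.1.dropUntil hxq).reverse (by
          intro e he
          simp only [edges_reverse, List.mem_reverse] at he ⊢
          exact q.edges_dropUntil_subset_edges hxq he)
      exact Or.inr ⟨hxq, heq.trans heq'.symm⟩

theorem eq_or_length_add_eq_of_cons_isCycle {h : G.Adj u w} {q : G.Walk w u}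
    (hc : (cons h q).IsCycle) {W₁ W₂ : G.Walk u x} (hx : x ≠ u)
    (h₁ : IsPathOf G (cons h q) W₁) (h₂ : IsPathOf G (cons h q) W₂) :
    W₁ = W₂ ∨ W₁.length + W₂.length = (cons h q).length := by
  classical
  have hsplit (hx : x ∈ q.support) :
      (q.takeUntil x hx).length + (q.dropUntil x hx).length = q.length := by
    rw [← length_append, take_spec]
  rcases eq_cons_takeUntil_or_eq_reverse_dropUntil hc hx h₁ with ⟨hx₁, rfl⟩ | ⟨hx₁, rfl⟩ <;>
    rcases eq_cons_takeUntil_or_eq_reverse_dropUntil hc hx h₂ with ⟨hx₂, rfl⟩ | ⟨hx₂, rfl⟩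
  · exact Or.inl rfl
  · have := hsplit hx₁; right; simp only [length_cons, length_reverse]; omega
  · have := hsplit hx₁; right; simp only [length_cons, length_reverse]; omega
  · exact Or.inl rfl

namespace IsCycle

variable {c : G.Walk r r}

theorem eq_or_length_add_eq (hc : c.IsCycle) {W₁ W₂ : G.Walk u x} (hx : x ≠ u)
    (h₁ : IsPathOf G c W₁) (h₂ : IsPathOf G c W₂) :
    W₁ = W₂ ∨ W₁.length + W₂.length = c.length := by
  classical
  have hu := h₁.start_mem_support hx.symm
  have hrot (W : G.Walk u x) (hW : IsPathOf G c W) : IsPathOf G (c.rotate u hu) W :=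
    ⟨hW.1, fun e he => (rotate_edges c u hu).mem_iff.mpr (hW.2 e he)⟩
  rw [← length_rotate c u hu]
  have hc' := hc.rotate hu
  generalize c.rotate u hu = c' at hc' hrot
  cases c' with
  | nil => exact absurd hc' not_isCycle_nil
  | cons h q => exact eq_or_length_add_eq_of_cons_isCycle hc' hx (hrot _ h₁) (hrot _ h₂)

theorem isPathOf_append (hc : c.IsCycle) {A₁ : G.Walk u m} {A₂ : G.Walk m w}
    (h₁ : IsPathOf G c A₁) (h₂ : IsPathOf G c A₂)
    (hdisj : ∀ e ∈ A₁.edges, e ∉ A₂.edges) (hlen : A₁.length + A₂.length < c.length) :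
    IsPathOf G c (A₁.append A₂) := by
  classical
  refine ⟨?_, fun e he => ?_⟩
  swap
  · rw [edges_append, List.mem_append] at he
    exact he.elim (h₁.2 e) (h₂.2 e)
  rw [isPath_def, support_append, List.nodup_append]
  refine ⟨h₁.1.support_nodup, h₂.1.support_nodup.sublist (List.tail_sublist _), ?_⟩
  rintro z hz₁ z' hz₂ rfl
  have hzm : z ≠ m := by
    rintro rfl
    have hnd := h₂.1.support_nodup
    rw [← A₂.cons_tail_support, List.nodup_cons] at hnd
    exact hnd.1 hz₂
  have hz₂' := List.mem_of_mem_tail hz₂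
  let X := A₁.dropUntil z hz₁
  let Y := (A₂.takeUntil z hz₂').reverse
  have hX : IsPathOf G c X :=
    ⟨h₁.1.dropUntil hz₁, fun e he => h₁.2 e (A₁.edges_dropUntil_subset_edges hz₁ he)⟩
  have hY : IsPathOf G c Y := IsPathOf.reverse
    ⟨h₂.1.takeUntil hz₂', fun e he => h₂.2 e (A₂.edges_takeUntil_subset_edges hz₂' he)⟩
  rcases hc.eq_or_length_add_eq hzm.symm hX hY with hXY | hXY
  · obtain ⟨e, he⟩ := List.exists_mem_of_ne_nil _ (edges_eq_nil.not.mpr fun hn => hzm hn.eq)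
    refine hdisj e (A₁.edges_dropUntil_subset_edges hz₁ he) ?_
    have he' : e ∈ Y.edges := hXY ▸ he
    rw [edges_reverse, List.mem_reverse] at he'
    exact A₂.edges_takeUntil_subset_edges hz₂' he'
  · have := A₁.length_dropUntil_le_length hz₁
    have := A₂.length_takeUntil_le_length hz₂'
    simp only [X, Y, length_reverse] at hXY
    omega

end IsCycle

lemma suppSet_append (p : G.Walk u v) (q : G.Walk v w) :
    suppSet (p.append q) = suppSet p ∪ suppSet q := by
  ext; simp [suppSet]

lemma suppSet_reverse (p : G.Walk u v) : suppSet p.reverse = suppSet p := by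
  ext; simp [suppSet]

lemma suppSet_eq_tail_support [DecidableEq V] {p : G.Walk u u} (hp : ¬p.Nil) :
    suppSet p = ↑p.support.tail.toFinset := by
  ext x
  simp only [suppSet, Set.mem_ofPred_eq, Finset.mem_coe, List.mem_toFinset, mem_support_iff]
  exact ⟨fun h => h.elim (· ▸ end_mem_tail_support hp) id, Or.inr⟩

lemma ncard_suppSet_le_length {p : G.Walk u u} (hp : ¬p.Nil) :
    (suppSet p).ncard ≤ p.length := by
  classical
  rw [suppSet_eq_tail_support hp, Set.ncard_coe_finset]
  simpa using p.support.tail.toFinset_card_le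

lemma IsCycle.ncard_suppSet {c : G.Walk u u} (hc : c.IsCycle) :
    (suppSet c).ncard = c.length := by
  classical
  rw [suppSet_eq_tail_support hc.not_nil, Set.ncard_coe_finset,
    List.toFinset_card_of_nodup hc.support_nodup]
  simp

lemma mem_edges_of_length_eq_one {p : G.Walk u v} (h : p.length = 1) : s(u, v) ∈ p.edges := by
  match p, h with
  | .cons _ .nil, _ => simp

theorem isChordless_of_length_eq_dist {p : G.Walk u v} (hp : p.length = G.dist u v) :
    p.IsChordless := by
  rw [isChordless_iff_forall_mem_edges]
  intro x y hx hy hxy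
  obtain ⟨q, r, rfl⟩ := mem_support_iff_exists_append.mp hx
  rcases (mem_support_append_iff _ _).mp hy with hy | hy
  · obtain ⟨q₁, q₂, rfl⟩ := mem_support_iff_exists_append.mp hy
    have h₂ : q₂.length = 1 := by
      rw [length_eq_dist_of_subwalk hp ⟨q₁, r, rfl⟩, dist_eq_one_iff_adj.mpr hxy.symm]
    rw [Sym2.eq_swap]
    simp [mem_edges_of_length_eq_one h₂]
  · obtain ⟨r₁, r₂, rfl⟩ := mem_support_iff_exists_append.mp hy
    have h₁ : r₁.length = 1 := by
      rw [length_eq_dist_of_subwalk hp ⟨q, r₂, by simp [append_assoc]⟩,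
        dist_eq_one_iff_adj.mpr hxy]
    simp [mem_edges_of_length_eq_one h₁]

theorem isInducedPathOn_of_length_add_le_dist {P₁ : G.Walk u m} {P₂ : G.Walk m w}
    (h : P₁.length + P₂.length ≤ G.dist u w) :
    IsInducedPathOn G u w (suppSet P₁ ∪ suppSet P₂) := by
  have hgeod : (P₁.append P₂).length = G.dist u w :=
    le_antisymm (by simpa using h) (dist_le _)
  refine ⟨P₁.append P₂, isPath_of_length_eq_dist _ hgeod, suppSet_append _ _,
    fun x y hx hy hxy => ?_⟩
  rw [← suppSet_append] at hx hy
  exact (isChordless_of_length_eq_dist hgeod).mem_edges hx hy hxy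

end SimpleGraph.Walk

lemma IsPathOf.length_le_cycleDist {G : SimpleGraph V} {r u w : V} {c : G.Walk r r}
    {Q : G.Walk u w} (hQ : IsPathOf G c Q) (h : ∀ Q' : G.Walk u w, IsPathOf G c Q' → Q.length ≤ Q'.length) :
    Q.length ≤ cycleDist G c u w :=
  le_csInf ⟨_, Q, hQ, rfl⟩ (by rintro n ⟨Q', hQ', rfl⟩; exact h Q' hQ')

open Walk in
theorem GoodHole.dist_eq_length {G : SimpleGraph V} {r u w : V} {c : G.Walk r r}
    (hgood : GoodHole G c) (hC : IsShortestEvenHole G c) {Q : G.Walk u w}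
    (hQ : IsPathOf G c Q) (h2 : 2 ≤ Q.length) (h4 : 4 * Q.length ≤ c.length + 3) :
    G.dist u w = Q.length := by
  have hc : c.IsCycle := hC.1.1.1.1
  have hc3 := hc.three_le_length
  have huw : u ≠ w := fun h =>
    not_nil_iff_lt_length.mpr (by omega : 0 < Q.length) (hQ.1.nil_iff_eq.mpr h)
  have hu := hQ.start_mem_support huw
  have hw := hQ.end_mem_support huw
  have hother (Q' : G.Walk u w) (hQ' : IsPathOf G c Q') :
      Q.length ≤ Q'.length ∧ Q.length + Q'.length ≤ c.length := by
    rcases hc.eq_or_length_add_eq huw.symm hQ hQ' with rfl | h <;> omega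
  have hnadj : ¬G.Adj u w := fun hadj => by
    have hedge := hC.1.1.1.2 u w hu hw hadj
    have := (hother hadj.toWalk ⟨by simp [hadj.ne], by simpa using hedge⟩).1
    simp only [Adj.length_toWalk] at this
    omega
  refine le_antisymm (dist_le Q) (not_lt.mp fun hlt => ?_)
  obtain ⟨R, hR, hRlen⟩ := Q.reachable.exists_path_of_dist
  have hR2 := Q.reachable.one_lt_dist_of_ne_of_not_adj huw hnadj
  have hcut : CShortcut G c R :=
    ⟨by omega, by have := hQ.length_le_cycleDist fun Q' h => (hother Q' h).1; omega, by omega⟩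
  obtain ⟨Q', hQ', r', w', hw', hsupp⟩ := hgood u w R ⟨hR, huw, hnadj, hu, hw⟩ hcut
  have hw'len : w'.length = c.length := le_antisymm (hw'.2 r c hC.1) (hC.2 r' w' hw'.1)
  have hcount : c.length ≤ R.length + Q'.length :=
    calc c.length = (suppSet w').ncard := by rw [hw'.1.1.1.1.ncard_suppSet, hw'len]
      _ = (suppSet (R.append Q'.reverse)).ncard := by
        rw [hsupp, suppSet_append, suppSet_reverse]
      _ ≤ (R.append Q'.reverse).length :=
        ncard_suppSet_le_length (not_nil_iff_lt_length.mpr (by simp; omega))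
      _ = R.length + Q'.length := by simp
  have := (hother Q' hQ').2
  omega

theorem stmt15_general (G : SimpleGraph V) {r : V} (c : G.Walk r r)
    (hC : IsShortestEvenHole G c) (hgood : GoodHole G c)
    (a b : ℕ) (ha : 3 ≤ a) (hlen : c.length = 8 * a + b)
    (v : ZMod 8 → V) (A : ∀ i : ZMod 8, G.Walk (v i) (v (i + 1)))
    (hA : ∀ i, IsPathOf G c (A i))
    (hdisj : ∀ i j, i ≠ j → ∀ e ∈ (A i).edges, e ∉ (A j).edges)
    (hval : ∀ i, (A i).length = a ∨ (A i).length = a + 1)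
    (hsum : ∀ i, (A i).length + (A (i + 1)).length ≤ 2 * a + (b + 3) / 4)
    (P : ∀ i : ZMod 8, G.Walk (v i) (v (i + 1)))
    (hP : ∀ i, IsShortestPath G (P i)) :
    ∀ i : ZMod 8,
      IsInducedPathOn G (v i) (v (i + 2)) (suppSet (P i) ∪ suppSet (P (i + 1))) := by
  intro i
  have hge (j : ZMod 8) : a ≤ (A j).length := by rcases hval j with h | h <;> omega
  have hi := hge i
  have hi' := hge (i + 1)
  have hsum' := hsum i
  have hne : i ≠ i + 1 := fun h => absurd (add_eq_left.mp h.symm) (by decide)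
  have hQ := hC.1.1.1.1.isPathOf_append (hA i) (hA (i + 1)) (hdisj i (i + 1) hne)
    (by omega)
  have hdist := hgood.dist_eq_length hC hQ (by rw [Walk.length_append]; omega)
    (by rw [Walk.length_append]; omega)
  rw [show i + 2 = i + 1 + 1 by ring]
  apply Walk.isInducedPathOn_of_length_add_le_dist
  rw [hdist, Walk.length_append]
  exact add_le_add ((hP i).2 _) ((hP (i + 1)).2 _)

theorem stmt15 (G : SimpleGraph V) {r : V} (c : G.Walk r r)
    (hC : IsShortestEvenHole G c) (hgood : GoodHole G c)
    (a b : ℕ) (ha : 3 ≤ a) (hb : b ≤ 7) (hlen : c.length = 8 * a + b)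
    (v : ZMod 8 → V) (A : ∀ i : ZMod 8, G.Walk (v i) (v (i + 1)))
    (hA : ∀ i, IsPathOf G c (A i))
    (hAshort : ∀ i, (A i).length = cycleDist G c (v i) (v (i + 1)))
    (hdisj : ∀ i j, i ≠ j → ∀ e ∈ (A i).edges, e ∉ (A j).edges)
    (hval : ∀ i, (A i).length = a ∨ (A i).length = a + 1)
    (hsum : ∀ i, (A i).length + (A (i + 1)).length ≤ 2 * a + (b + 3) / 4)
    (P : ∀ i : ZMod 8, G.Walk (v i) (v (i + 1)))
    (hP : ∀ i, IsShortestPath G (P i)) :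
    ∀ i : ZMod 8,
      IsInducedPathOn G (v i) (v (i + 2)) (suppSet (P i) ∪ suppSet (P (i + 1))) :=
  stmt15_general G c hC hgood a b ha hlen v A hA hdisj hval hsum P hP
end
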